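/- arXiv:2112.09452 — 6 statements merged into one kernel-verified Lean document; each statement's English description precedes it below -/
import Mathlib

section
/- Let K = (−1/2, −1/4, 0) ∈ ℝ³. Then for every real α, K · F(π, α) = 1, where F(q) = (F₁(q), F₂(q), F₃(q)) with F₁, F₂, F₃ defined as the square-lattice shell Fourier transforms. -/
open Real

noncomputable def Fvec (q : ℝ × ℝ) : ℝ × ℝ × ℝ :=
  (2 * Real.cos q.1 + 2 * Real.cos q.2,
   2 * Real.cos (q.1 - q.2) + 2 * Real.cos (q.1 + q.2),
   2 * Real.cos (2 * q.1) + 2 * Real.cos (2 * q.2))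

def dot3 (K F : ℝ × ℝ × ℝ) : ℝ := K.1 * F.1 + K.2.1 * F.2.1 + K.2.2 * F.2.2

theorem modulated_stripe_fan_apex (α : ℝ) :
    dot3 (-(1/2), -(1/4), 0) (Fvec (π, α)) = 1 := by
  simp only [dot3, Fvec, Real.cos_pi_sub, Real.cos_pi, Real.cos_add, Real.cos_sub,
    Real.sin_pi]
  ring
end

section
/- Let K = (0, 1/2, −1/4) ∈ ℝ³. Then for every real α, K · F(α, α) = 1, where F(q) = (F₁(q), F₂(q), F₃(q)) with F₁(q) = 2cos q1 + 2cos q2, F₂(q) = 2cos(q1−q2) + 2cos(q1+q2), F₃(q) = 2cos 2q1 + 2cos 2q2. -/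
open Real

theorem diagonal_stripe_fan_apex (α : ℝ) :
    dot3 (0, 1/2, -(1/4)) (Fvec (α, α)) = 1 := by
  simp only [dot3, Fvec]
  have h : α - α = 0 := by ring
  have h2 : α + α = 2 * α := by ring
  rw [h, h2, Real.cos_zero]
  ring
end

section
/- For every α ∈ ℝ, the mode q^{AD}(α) = (π − α, α) satisfies F(q^{AD}(α)) = (0, −2(1 + cos 2α), 4 cos 2α); consequently every K of the form (K₁, −1/2, −1/4) with K₁ ∈ ℝ satisfies K · F(q^{AD}(α)) = 1 for all α simultaneously. -/
open Real

theorem antidiagonal_faceless_modes (α : ℝ) :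
    Fvec (π - α, α) = (0, -2 * (1 + Real.cos (2 * α)), 4 * Real.cos (2 * α)) ∧
    ∀ K₁ : ℝ, dot3 (K₁, -(1/2), -(1/4)) (Fvec (π - α, α)) = 1 := by
  have h : Fvec (π - α, α) = (0, -2 * (1 + Real.cos (2 * α)), 4 * Real.cos (2 * α)) := by
    simp only [Fvec, Prod.mk.injEq]
    constructor
    · rw [Real.cos_pi_sub]; ring
    constructor
    · have h1 : π - α - α = π - 2 * α := by ring
      have h2 : π - α + α = π := by ring
      rw [h1, h2, Real.cos_pi_sub, Real.cos_pi]; ring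
    · have h1 : 2 * (π - α) = 2 * π - 2 * α := by ring
      rw [h1, Real.cos_sub, Real.cos_two_pi, Real.sin_two_pi]; ring
  refine ⟨h, fun K₁ => ?_⟩
  rw [h]; simp [dot3]
end

section
/- Let N ≥ 1 and let l₁, l₂ be integers with 0 ≤ l₁, l₂ < N. Then there exist integers d, s with d a positive divisor of N and 0 ≤ s < d such that l₁·d ≡ 0 (mod N) and l₁·s + l₂·(N/d) ≡ 0 (mod N). -/
theorem hermite_mode_compatibility (N : ℕ) (hN : 1 ≤ N) (l₁ l₂ : ℕ)
    (h₁ : l₁ < N) (h₂ : l₂ < N) :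
    ∃ d s : ℕ, d ∣ N ∧ 0 < d ∧ s < d ∧
      N ∣ l₁ * d ∧ N ∣ l₁ * s + l₂ * (N / d) := by
  have hN0 : 0 < N := hN
  have hg : 0 < Nat.gcd l₁ N := Nat.gcd_pos_of_pos_right _ hN0
  set g := Nat.gcd l₁ N with hgdef
  set a := l₁ / g with hadef
  set m := N / g with hmdef
  have hl₁ : l₁ = g * a := (Nat.mul_div_cancel' (Nat.gcd_dvd_left _ _)).symm
  have hNm : N = g * m := (Nat.mul_div_cancel' (Nat.gcd_dvd_right _ _)).symm
  have hm0 : 0 < m := by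
    rcases Nat.eq_zero_or_pos m with h | h
    · simp [h] at hNm; omega
    · exact h
  have hcop : Nat.Coprime a m := Nat.coprime_div_gcd_div_gcd hg
  haveI : NeZero m := ⟨hm0.ne'⟩
  have hunit : IsUnit (a : ZMod m) := by
    rw [ZMod.isUnit_iff_coprime]; exact hcop
  set s := ((-(l₂ : ZMod m)) * (a : ZMod m)⁻¹).val with hsdef
  refine ⟨m, s, ⟨g, by rw [hNm]; ring⟩, hm0, ZMod.val_lt _, ⟨a, by rw [hl₁, hNm]; ring⟩, ?_⟩
  have hNd : N / m = g := by
    rw [hNm, Nat.mul_div_cancel _ hm0]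
  rw [hNd]
  have hkey : m ∣ a * s + l₂ := by
    have : ((a * s + l₂ : ℕ) : ZMod m) = 0 := by
      have h1 : (a : ZMod m) * ((a : ZMod m)⁻¹) = 1 := ZMod.mul_inv_of_unit _ hunit
      push_cast [hsdef]
      rw [ZMod.natCast_val, ZMod.cast_id, mul_left_comm, h1]
      ring
    exact (ZMod.natCast_eq_zero_iff _ _).mp this
  obtain ⟨k, hk⟩ := hkey
  refine ⟨k, ?_⟩
  rw [hl₁, hNm]
  calc g * a * s + l₂ * g = g * (a * s + l₂) := by ring
    _ = g * (m * k) := by rw [hk]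
    _ = g * m * k := by ring
end

section
/- Define, for a ∈ [0, 1/2], K^{Ridge}(a) = (4 cos²(πa), −1, −1/2) / (4 cos(2πa) + cos(4πa) + 5). Then for every a ∈ [0, 1/2], K^{Ridge}(a) · F(2πa·t, 0)|_{t=1} satisfies: K^{Ridge}(a) · F(q) = 1 where q = (2πa, 0), and moreover K^{Ridge}(a) lies in the plane K₂ = 2K₃. -/
open Real

noncomputable def Kridge (a : ℝ) : ℝ × ℝ × ℝ :=
  ((4 * Real.cos (π * a) ^ 2) / (4 * Real.cos (2 * π * a) + Real.cos (4 * π * a) + 5),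
   (-1) / (4 * Real.cos (2 * π * a) + Real.cos (4 * π * a) + 5),
   (-(1/2)) / (4 * Real.cos (2 * π * a) + Real.cos (4 * π * a) + 5))

/-! In terms of `c = cos (2πa)`, the denominator of `Kridge a` is `2 (c + 1)² + 2 > 0`, and
`4 cos² (πa) = 2 (c + 1)`; the numerator of `Kridge a · F(2πa, 0)` then reduces to the same
quadratic `2 (c + 1)² + 2`. -/

theorem Fvec_mk_zero (θ : ℝ) :
    Fvec (θ, 0) = (2 * cos θ + 2, 4 * cos θ, 2 * cos (2 * θ) + 2) := by
  simp only [Fvec, sub_zero, add_zero, mul_zero, cos_zero]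
  ext <;> simp only <;> ring

theorem ridge_denom_eq (a : ℝ) :
    4 * cos (2 * π * a) + cos (4 * π * a) + 5 = 2 * (cos (2 * π * a) + 1) ^ 2 + 2 := by
  rw [show 4 * π * a = 2 * (2 * π * a) by ring, cos_two_mul]
  ring

theorem ridge_denom_pos (a : ℝ) : 0 < 4 * cos (2 * π * a) + cos (4 * π * a) + 5 := by
  rw [ridge_denom_eq]
  positivity

theorem ridge_on_striped_plane_general (a : ℝ) :
    dot3 (Kridge a) (Fvec (2 * π * a, 0)) = 1 ∧
    (Kridge a).2.1 = 2 * (Kridge a).2.2 := by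
  have hD := (ridge_denom_pos a).ne'
  constructor
  · have hsq : 4 * cos (π * a) ^ 2 = 2 * (cos (2 * π * a) + 1) := by
      rw [cos_sq, show 2 * (π * a) = 2 * π * a by ring]
      ring
    rw [dot3, Kridge, Fvec_mk_zero, hsq, div_mul_eq_mul_div, div_mul_eq_mul_div,
      div_mul_eq_mul_div, ← add_div, ← add_div, div_eq_one_iff_eq hD, ridge_denom_eq,
      cos_two_mul]
    ring
  · simp only [Kridge]
    field_simp

theorem ridge_on_striped_plane (a : ℝ) (ha : a ∈ Set.Icc (0 : ℝ) (1/2)) :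
    dot3 (Kridge a) (Fvec (2 * π * a, 0)) = 1 ∧
    (Kridge a).2.1 = 2 * (Kridge a).2.2 :=
  ridge_on_striped_plane_general a
end

section
/- Let ξ₁ = cos q₁, ξ₂ = cos q₂ with (q₁,q₂) ∈ ℝ², and define φ₁ = 2ξ₁ + 2ξ₂ and φ₂ = (4/√5)(2 + ξ₁ξ₂ − 2ξ₁² − 2ξ₂²). Then for every (q₁,q₂), the bounds −(2/√5)(2 − |φ₁|)(3 − |φ₁|) ≤ φ₂ ≤ (2/√5)(4 − (3/8)φ₁²) hold, and φ₁ ∈ [−4, 4]. -/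
open Real

theorem natural_coordinates_bounds (q1 q2 : ℝ) (ξ1 ξ2 φ1 φ2 : ℝ)
    (hξ1 : ξ1 = Real.cos q1) (hξ2 : ξ2 = Real.cos q2)
    (hφ1 : φ1 = 2 * ξ1 + 2 * ξ2)
    (hφ2 : φ2 = (4 / Real.sqrt 5) * (2 + ξ1 * ξ2 - 2 * ξ1 ^ 2 - 2 * ξ2 ^ 2)) :
    -(2 / Real.sqrt 5) * (2 - |φ1|) * (3 - |φ1|) ≤ φ2 ∧
      φ2 ≤ (2 / Real.sqrt 5) * (4 - (3/8) * φ1 ^ 2) ∧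
      φ1 ∈ Set.Icc (-4 : ℝ) 4 := by
  have ha1 : -1 ≤ ξ1 := hξ1 ▸ Real.neg_one_le_cos q1
  have ha2 : ξ1 ≤ 1 := hξ1 ▸ Real.cos_le_one q1
  have hb1 : -1 ≤ ξ2 := hξ2 ▸ Real.neg_one_le_cos q2
  have hb2 : ξ2 ≤ 1 := hξ2 ▸ Real.cos_le_one q2
  have h5 : (0:ℝ) < Real.sqrt 5 := Real.sqrt_pos.mpr (by norm_num)
  have hc : (0:ℝ) ≤ 2 / Real.sqrt 5 := by positivity
  have hu : |ξ1 + ξ2| ≤ 1 + ξ1 * ξ2 := by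
    rw [abs_le]
    constructor <;> nlinarith [mul_nonneg (sub_nonneg.mpr ha2) (sub_nonneg.mpr hb2),
      mul_nonneg (sub_nonneg.mpr (neg_le.mp ha1)) (sub_nonneg.mpr (neg_le.mp hb1)),
      mul_nonneg (sub_nonneg.mpr ha2) (sub_nonneg.mpr (neg_le.mp hb1)),
      mul_nonneg (sub_nonneg.mpr (neg_le.mp ha1)) (sub_nonneg.mpr hb2)]
  have husq : |ξ1 + ξ2| ^ 2 = (ξ1 + ξ2) ^ 2 := sq_abs _
  have hphi : |φ1| = 2 * |ξ1 + ξ2| := by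
    rw [hφ1, show 2 * ξ1 + 2 * ξ2 = 2 * (ξ1 + ξ2) by ring, abs_mul]
    norm_num
  refine ⟨?_, ?_, ?_⟩
  · rw [hφ2, hphi]
    have key : -(2 - 2 * |ξ1 + ξ2|) * (3 - 2 * |ξ1 + ξ2|) ≤
        2 * (2 + ξ1 * ξ2 - 2 * ξ1 ^ 2 - 2 * ξ2 ^ 2) := by
      nlinarith [husq, hu, abs_nonneg (ξ1 + ξ2)]
    calc -(2 / Real.sqrt 5) * (2 - 2 * |ξ1 + ξ2|) * (3 - 2 * |ξ1 + ξ2|)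
        = (2 / Real.sqrt 5) * (-(2 - 2 * |ξ1 + ξ2|) * (3 - 2 * |ξ1 + ξ2|)) := by ring
      _ ≤ (2 / Real.sqrt 5) * (2 * (2 + ξ1 * ξ2 - 2 * ξ1 ^ 2 - 2 * ξ2 ^ 2)) :=
          mul_le_mul_of_nonneg_left key hc
      _ = (4 / Real.sqrt 5) * (2 + ξ1 * ξ2 - 2 * ξ1 ^ 2 - 2 * ξ2 ^ 2) := by ring
  · rw [hφ2, hφ1]
    have key : 2 * (2 + ξ1 * ξ2 - 2 * ξ1 ^ 2 - 2 * ξ2 ^ 2) ≤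
        4 - (3/8) * (2 * ξ1 + 2 * ξ2) ^ 2 := by nlinarith [sq_nonneg (ξ1 - ξ2)]
    calc (4 / Real.sqrt 5) * (2 + ξ1 * ξ2 - 2 * ξ1 ^ 2 - 2 * ξ2 ^ 2)
        = (2 / Real.sqrt 5) * (2 * (2 + ξ1 * ξ2 - 2 * ξ1 ^ 2 - 2 * ξ2 ^ 2)) := by ring
      _ ≤ (2 / Real.sqrt 5) * (4 - (3/8) * (2 * ξ1 + 2 * ξ2) ^ 2) :=
          mul_le_mul_of_nonneg_left key hc
  · constructor <;> (rw [hφ1]; linarith)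
end
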